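/- Let B ∈ ℂ^{n×n} be strictly accretive and partitioned as B = [[B₁₁, B₁₂],[B₂₁, B₂₂]] with B₁₁ square. Then B₁₁ is strictly accretive (hence invertible), and the Schur complement B₂₂ − B₂₁ B₁₁⁻¹ B₁₂ is strictly accretive. -/

import Mathlib

/-!
Strict accretivity of `B` means `0 < re ⟪x, B x⟫` for all `x ≠ 0`. Testing it on vectors supported
on the first block gives the claim for `B₁₁`, and a strictly accretive matrix has trivial kernel.
For the Schur complement `S`, take `x = -B₁₁⁻¹ B₁₂ y`: it kills the first block row of `B (x, y)`,
so `⟪(x, y), B (x, y)⟫ = ⟪y, S y⟫`.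
-/

open Matrix
open scoped ComplexOrder

namespace Matrix

variable {m n R 𝕜 : Type*}

theorem dotProduct_conjTranspose_mulVec [Fintype n] [CommRing R] [StarRing R] (A : Matrix n n R)
    (x : n → R) : star x ⬝ᵥ Aᴴ *ᵥ x = star (star x ⬝ᵥ A *ᵥ x) := by
  rw [star_dotProduct, star_mulVec, conjTranspose_conjTranspose, dotProduct_mulVec]

theorem posDef_add_conjTranspose_iff [Fintype n] [RCLike 𝕜] {A : Matrix n n 𝕜} :
    (A + Aᴴ).PosDef ↔ ∀ x : n → 𝕜, x ≠ 0 → 0 < RCLike.re (star x ⬝ᵥ A *ᵥ x) := by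
  have hquad (x : n → 𝕜) :
      star x ⬝ᵥ (A + Aᴴ) *ᵥ x = ((2 * RCLike.re (star x ⬝ᵥ A *ᵥ x) : ℝ) : 𝕜) := by
    rw [add_mulVec, dotProduct_add, dotProduct_conjTranspose_mulVec, RCLike.star_def,
      RCLike.add_conj]
    push_cast
    ring
  simp only [posDef_iff_dotProduct_mulVec, isHermitian_add_transpose_self, true_and, hquad,
    RCLike.ofReal_pos]
  exact forall₂_congr fun _ _ ↦ mul_pos_iff_of_pos_left two_pos

theorem isUnit_of_posDef_add_conjTranspose [Fintype n] [RCLike 𝕜] [DecidableEq n]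
    {A : Matrix n n 𝕜} (hA : (A + Aᴴ).PosDef) : IsUnit A := by
  rw [isUnit_iff_isUnit_det, isUnit_iff_ne_zero, ne_eq, ← exists_mulVec_eq_zero_iff]
  rintro ⟨v, hv, hAv⟩
  simpa [hAv] using posDef_add_conjTranspose_iff.mp hA v hv

theorem PosDef.submatrix_add_conjTranspose [CommRing R] [PartialOrder R] [StarRing R]
    {A : Matrix n n R} (hA : (A + Aᴴ).PosDef) {e : m → n} (he : Function.Injective e) :
    (A.submatrix e e + (A.submatrix e e)ᴴ).PosDef := by
  rw [conjTranspose_submatrix]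
  exact hA.submatrix he

theorem PosDef.toBlocks₁₁_add_conjTranspose [CommRing R] [PartialOrder R] [StarRing R]
    {M : Matrix (m ⊕ n) (m ⊕ n) R} (hM : (M + Mᴴ).PosDef) :
    (M.toBlocks₁₁ + M.toBlocks₁₁ᴴ).PosDef :=
  hM.submatrix_add_conjTranspose Sum.inl_injective

theorem dotProduct_fromBlocks_mulVec_eq_schurComplement [Fintype m] [Fintype n] [CommRing R]
    [StarRing R] [DecidableEq m] {A : Matrix m m R} (hA : IsUnit A) (B : Matrix m n R)
    (C : Matrix n m R) (D : Matrix n n R) (y : n → R) :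
    star (Sum.elim (-((A⁻¹ * B) *ᵥ y)) y) ⬝ᵥ
        fromBlocks A B C D *ᵥ Sum.elim (-((A⁻¹ * B) *ᵥ y)) y =
      star y ⬝ᵥ (D - C * A⁻¹ * B) *ᵥ y := by
  have hAA : A * A⁻¹ = 1 := mul_nonsing_inv A ((isUnit_iff_isUnit_det A).mp hA)
  have hinr : star (Sum.elim (-((A⁻¹ * B) *ᵥ y)) y) ∘ Sum.inr = star y := rfl
  rw [fromBlocks_mulVec, dotProduct_block, hinr]
  simp only [Sum.elim_comp_inl, Sum.elim_comp_inr, mulVec_neg, mulVec_mulVec,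
    ← Matrix.mul_assoc, hAA, Matrix.one_mul, neg_add_cancel, dotProduct_zero, zero_add,
    sub_mulVec, dotProduct_sub, dotProduct_add, dotProduct_neg]
  abel

theorem PosDef.schurComplement_add_conjTranspose [Fintype m] [Fintype n] [RCLike 𝕜]
    [DecidableEq m] {A : Matrix m m 𝕜} {B : Matrix m n 𝕜} {C : Matrix n m 𝕜} {D : Matrix n n 𝕜}
    (h : (fromBlocks A B C D + (fromBlocks A B C D)ᴴ).PosDef) :
    ((D - C * A⁻¹ * B) + (D - C * A⁻¹ * B)ᴴ).PosDef := by
  have hA : (A + Aᴴ).PosDef := by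
    simpa only [toBlocks_fromBlocks₁₁] using h.toBlocks₁₁_add_conjTranspose
  rw [posDef_add_conjTranspose_iff] at h ⊢
  intro y hy
  rw [← dotProduct_fromBlocks_mulVec_eq_schurComplement (isUnit_of_posDef_add_conjTranspose hA)]
  refine h _ fun h0 ↦ hy ?_
  simpa using congrArg (· ∘ Sum.inr) h0

end Matrix

/-- For a strictly accretive block matrix `B`, the (1,1) block is strictly
accretive (hence invertible) and the Schur complement of the (1,1) block is
strictly accretive. -/
theorem schurComplement_strictlyAccretive (p q : ℕ)
    (B : Matrix (Fin p ⊕ Fin q) (Fin p ⊕ Fin q) ℂ)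
    (hB : (B + Bᴴ).PosDef) :
    (B.toBlocks₁₁ + B.toBlocks₁₁ᴴ).PosDef ∧ IsUnit B.toBlocks₁₁ ∧
    ((B.toBlocks₂₂ - B.toBlocks₂₁ * B.toBlocks₁₁⁻¹ * B.toBlocks₁₂) +
      (B.toBlocks₂₂ - B.toBlocks₂₁ * B.toBlocks₁₁⁻¹ * B.toBlocks₁₂)ᴴ).PosDef := by
  have h₁₁ := hB.toBlocks₁₁_add_conjTranspose
  refine ⟨h₁₁, isUnit_of_posDef_add_conjTranspose h₁₁, ?_⟩
  rw [← fromBlocks_toBlocks B] at hB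
  exact hB.schurComplement_add_conjTranspose
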